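/- Let (A,B) be a c/d-cross-intersecting pair of subsets of [n] with |A|·|B| = 2^n, where c/d is irreducible with 0 < c/d < 1. Then B, viewed as a set of characteristic vectors, is a linear subspace of 𝔽₂ⁿ; in particular, for any B₁, B₂ ∈ B the symmetric difference B₁ Δ B₂ belongs to B. -/

import Mathlib

/-! Fix `a₀ ∈ A`. Since `d ≠ 0`, the relation `d |a ∩ b| = c |b|` gives `|a ∩ b| = |a₀ ∩ b|`,
so the characteristic vector `χ b` of every `b ∈ B` is orthogonal, for the dot product over `𝔽₂`,
to the span `U` of the differences `χ a - χ a₀`. Hence `|A| ≤ |U|` and `|B| ≤ |U⊥| = 2ⁿ / |U|`,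
and `|A| |B| = 2ⁿ` forces `χ '' B = U⊥`. -/

open Finset Submodule

namespace LinearMap.BilinForm

variable {K V : Type*} [Field K] [AddCommGroup V] [Module K V] [FiniteDimensional K V]
  {B : LinearMap.BilinForm K V}

theorem natCard_mul_natCard_orthogonal (hB : B.Nondegenerate) (W : Submodule K V) :
    Nat.card W * Nat.card (B.orthogonal W) = Nat.card V := by
  rw [Module.natCard_eq_pow_finrank (K := K) (V := W),
    Module.natCard_eq_pow_finrank (K := K) (V := B.orthogonal W),
    Module.natCard_eq_pow_finrank (K := K) (V := V), ← pow_add, finrank_orthogonal hB,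
    Nat.add_sub_cancel' W.finrank_le]

theorem coe_eq_orthogonal_span_of_card_mul_card_eq [Finite V] (hB : B.Nondegenerate)
    {S T : Finset V} {s₀ : V} (hST : ∀ s ∈ S, ∀ t ∈ T, B s t = B s₀ t)
    (hcard : #S * #T = Nat.card V) :
    (T : Set V) = B.orthogonal (span K ((· - s₀) '' S)) := by
  set U := span K ((· - s₀) '' (S : Set V))
  have hTU : (T : Set V) ⊆ B.orthogonal U := fun t ht => by
    have hU : U ≤ LinearMap.ker (B.flip t) := span_le.2 <| by
      rintro _ ⟨s, hs, rfl⟩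
      simp [hST s hs t ht]
    exact mem_orthogonal_iff.2 fun u hu => hU hu
  have hSU : #S ≤ Nat.card U :=
    calc #S = ((· - s₀) '' (S : Set V)).ncard := by
          rw [Set.ncard_image_of_injective _ sub_left_injective, Set.ncard_coe_finset]
      _ ≤ (U : Set V).ncard := Set.ncard_le_ncard subset_span
      _ = Nat.card U := (Nat.card_coe_set_eq _).symm
  have hUT : Nat.card (B.orthogonal U) ≤ #T := by
    refine Nat.le_of_mul_le_mul_left ?_ (Nat.card_pos (α := U))
    calc Nat.card U * Nat.card (B.orthogonal U) = #S * #T := by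
          rw [natCard_mul_natCard_orthogonal hB, hcard]
      _ ≤ Nat.card U * #T := Nat.mul_le_mul_right _ hSU
  refine Set.eq_of_subset_of_ncard_le hTU ?_
  rwa [← Nat.card_coe_set_eq, Set.ncard_coe_finset]

end LinearMap.BilinForm

section charVec

variable {α : Type*} [DecidableEq α] (R : Type*)

def charVec [Zero R] [One R] (s : Finset α) : α → R := fun i => if i ∈ s then 1 else 0

variable {R}

theorem charVec_injective [Zero R] [One R] [NeZero (1 : R)] :
    Function.Injective (charVec R (α := α)) := by
  intro s t h
  ext i
  have := congrFun h i
  by_cases hs : i ∈ s <;> by_cases ht : i ∈ t <;> simp_all [charVec]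

theorem charVec_dotProduct_charVec [Fintype α] [NonAssocSemiring R] (s t : Finset α) :
    charVec R s ⬝ᵥ charVec R t = #(s ∩ t) := by
  simp only [dotProduct, charVec, mul_ite, mul_one, mul_zero, sum_ite_mem, inter_univ, sum_const,
    nsmul_eq_mul, inter_comm]

theorem charVec_symmDiff [Ring R] [CharP R 2] (s t : Finset α) :
    charVec R (symmDiff s t) = charVec R s + charVec R t := by
  funext i
  by_cases hs : i ∈ s <;> by_cases ht : i ∈ t <;>
    simp [charVec, mem_symmDiff, hs, ht, CharTwo.add_self_eq_zero]

end charVec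

theorem maximal_B_subspace_general (n c d : ℕ) (hcd : c < d)
    (A B : Finset (Finset (Fin n)))
    (hcross : ∀ a ∈ A, ∀ b ∈ B, d * (a ∩ b).card = c * b.card)
    (hmax : A.card * B.card = 2 ^ n) :
    (∃ W : Submodule (ZMod 2) (Fin n → ZMod 2),
      ∀ s : Finset (Fin n), s ∈ B ↔ (fun i => if i ∈ s then (1 : ZMod 2) else 0) ∈ W) ∧
    ∀ b₁ ∈ B, ∀ b₂ ∈ B, symmDiff b₁ b₂ ∈ B := by
  obtain ⟨a₀, ha₀⟩ : A.Nonempty :=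
    card_pos.1 (Nat.pos_of_mul_pos_right (by rw [hmax]; positivity))
  have hinter (a) (ha : a ∈ A) (b) (hb : b ∈ B) : #(a ∩ b) = #(a₀ ∩ b) :=
    Nat.eq_of_mul_eq_mul_left (by omega) ((hcross a ha b hb).trans (hcross a₀ ha₀ b hb).symm)
  let χ : Finset (Fin n) → Fin n → ZMod 2 := charVec (ZMod 2)
  have hχ : Function.Injective χ := charVec_injective
  let Q := (1 : Matrix (Fin n) (Fin n) (ZMod 2)).toBilin'
  have hQ : Q.Nondegenerate :=
    LinearMap.BilinForm.nondegenerate_toBilin'_of_det_ne_zero' _ (by simp)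
  have hQχ (s t : Finset (Fin n)) : Q (χ s) (χ t) = #(s ∩ t) := by
    simp [Q, χ, Matrix.toBilin'_apply', charVec_dotProduct_charVec]
  have hB := LinearMap.BilinForm.coe_eq_orthogonal_span_of_card_mul_card_eq hQ
    (S := A.image χ) (T := B.image χ) (s₀ := χ a₀)
    (by
      simp only [forall_mem_image, hQχ]
      exact fun a ha b hb => congrArg Nat.cast (hinter a ha b hb))
    (by simp [card_image_of_injective _ hχ, hmax])
  obtain ⟨W, hBW⟩ : ∃ W : Submodule (ZMod 2) (Fin n → ZMod 2),
      (B.image χ : Set (Fin n → ZMod 2)) = W := ⟨_, hB⟩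
  have hmem (s : Finset (Fin n)) : s ∈ B ↔ χ s ∈ W := by
    rw [← hχ.mem_finset_image (s := B), ← mem_coe, hBW, SetLike.mem_coe]
  refine ⟨⟨W, hmem⟩, fun b₁ h₁ b₂ h₂ => ?_⟩
  rw [hmem, show χ (symmDiff b₁ b₂) = χ b₁ + χ b₂ from charVec_symmDiff b₁ b₂]
  exact add_mem ((hmem _).1 h₁) ((hmem _).1 h₂)

theorem maximal_B_subspace (n c d : ℕ) (hn : 0 < n) (hc : 0 < c) (hcd : c < d)
    (hcop : Nat.Coprime c d)
    (A B : Finset (Finset (Fin n)))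
    (hcross : ∀ a ∈ A, ∀ b ∈ B, d * (a ∩ b).card = c * b.card)
    (hmax : A.card * B.card = 2 ^ n) :
    (∃ W : Submodule (ZMod 2) (Fin n → ZMod 2),
      ∀ s : Finset (Fin n), s ∈ B ↔ (fun i => if i ∈ s then (1 : ZMod 2) else 0) ∈ W) ∧
    ∀ b₁ ∈ B, ∀ b₂ ∈ B, symmDiff b₁ b₂ ∈ B :=
  maximal_B_subspace_general n c d hcd A B hcross hmax
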